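/- Let M ⊆ ℤ^m be an affine monoid with facets F₁,…,F_t of cone(M), satisfying gp(M) ∩ relint(cone(M)) ⊆ M. Then M' := ⋂_{i=1}^t M_i equals the union over all faces F of cone(M) of (⋂_{F ⊆ F_i} gp(M ∩ F_i)) ∩ relint(F), with the convention that the empty intersection (for F = cone(M)) is gp(M). -/

import Mathlib

noncomputable section

/-- The canonical embedding `ℤ^m → ℝ^m`. -/
def toR {m : ℕ} (x : Fin m → ℤ) : Fin m → ℝ := fun i => (x i : ℝ)

/-- The subgroup of `ℤ^m` generated by a submonoid `M`. -/
def gp {m : ℕ} (M : AddSubmonoid (Fin m → ℤ)) : AddSubgroup (Fin m → ℤ) :=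
  AddSubgroup.closure (M : Set (Fin m → ℤ))

/-- The convex cone in `ℝ^m` generated by `M`: all nonnegative real combinations
of elements of `M`. -/
def coneM {m : ℕ} (M : AddSubmonoid (Fin m → ℤ)) : Set (Fin m → ℝ) :=
  {x | ∃ (n : ℕ) (c : Fin n → ℝ) (v : Fin n → (Fin m → ℤ)),
    (∀ i, 0 ≤ c i) ∧ (∀ i, v i ∈ M) ∧ x = ∑ i, c i • toR (v i)}

/-- Faces of `coneM M`: the cone itself, or an intersection with a supporting
hyperplane given by a linear form nonnegative on the cone. -/
def IsFace {m : ℕ} (M : AddSubmonoid (Fin m → ℤ)) (F : Set (Fin m → ℝ)) : Prop :=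
  F = coneM M ∨ ∃ α : (Fin m → ℝ) →ₗ[ℝ] ℝ,
    (∀ x ∈ coneM M, 0 ≤ α x) ∧ F = {x ∈ coneM M | α x = 0}

/-- A facet: a maximal proper face. -/
def IsFacet {m : ℕ} (M : AddSubmonoid (Fin m → ℤ)) (F : Set (Fin m → ℝ)) : Prop :=
  IsFace M F ∧ F ≠ coneM M ∧ ∀ G, IsFace M G → F ⊆ G → G = F ∨ G = coneM M

/-- The subgroup `gp(M ∩ F)` of `ℤ^m` generated by the elements of `M` lying
in the face `F`. -/
def gpF {m : ℕ} (M : AddSubmonoid (Fin m → ℤ)) (F : Set (Fin m → ℝ)) :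
    AddSubgroup (Fin m → ℤ) :=
  AddSubgroup.closure {a : Fin m → ℤ | a ∈ M ∧ toR a ∈ F}

/-- `M` is seminormal: `z ∈ gp(M)`, `2z ∈ M`, `3z ∈ M` imply `z ∈ M`. -/
def Seminormal {m : ℕ} (M : AddSubmonoid (Fin m → ℤ)) : Prop :=
  ∀ z ∈ gp M, 2 • z ∈ M → 3 • z ∈ M → z ∈ M

/-- `M` is normal: `z ∈ gp(M)`, `kz ∈ M` for some `k ≥ 1` imply `z ∈ M`. -/
def IsNormal {m : ℕ} (M : AddSubmonoid (Fin m → ℤ)) : Prop :=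
  ∀ z ∈ gp M, (∃ k : ℕ, 0 < k ∧ k • z ∈ M) → z ∈ M

/-- `M` is positive: `0` is the only invertible element. -/
def Positive {m : ℕ} (M : AddSubmonoid (Fin m → ℤ)) : Prop :=
  ∀ a ∈ M, -a ∈ M → a = 0

/-- The localization monoid `M_F` of `M` at a face `F`:
elements `a ∈ gp(M)` with `a + b ∈ M` for some `b ∈ M ∩ F`. -/
def locM {m : ℕ} (M : AddSubmonoid (Fin m → ℤ)) (F : Set (Fin m → ℝ)) :
    Set (Fin m → ℤ) :=
  {a | a ∈ gp M ∧ ∃ b, b ∈ M ∧ toR b ∈ F ∧ a + b ∈ M}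

/-!
For `a ∈ M'` every `α i` is nonnegative at `a`, and `a` lies in the relative interior of the
face `G` cut out by the `α i` vanishing at `a`; on a facet `F i ⊇ G`, `a = (a + b) - b` with
`a + b, b ∈ M ∩ F i`. Conversely, let `a ∈ gp M` lie in the relative interior of a face `G`.
On a facet containing `G`, `a` is a difference of elements of `M ∩ F i`. On a facet `F i` not
containing `G`, take for `b` the sum of the generators of `M` lying on `F i`: it is positive on
every other facet, so `a + b` is positive on all facets, hence in `relint (cone M)`, hence in `M`.

Both directions rest on the fact that a finitely generated cone is cut out, inside its linear
span, by its facet inequalities (Hahn–Banach at the last point of the cone on a segment leaving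
it); this also identifies the relative interior of a face through the sign pattern of the `α i`.
-/

open Set Filter Topology

theorem AddSubgroup.exists_add_mem_of_mem_closure {G : Type*} [AddCommGroup G]
    {N : AddSubmonoid G} {x : G} (hx : x ∈ AddSubgroup.closure (N : Set G)) :
    ∃ y ∈ N, x + y ∈ N := by
  induction hx using AddSubgroup.closure_induction with
  | mem x hx => exact ⟨0, N.zero_mem, by simpa using hx⟩
  | zero => exact ⟨0, N.zero_mem, by simp⟩
  | add x y _ _ hx hy =>
    obtain ⟨u, hu, hxu⟩ := hx
    obtain ⟨v, hv, hyv⟩ := hy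
    exact ⟨u + v, N.add_mem hu hv, by simpa [add_add_add_comm] using N.add_mem hxu hyv⟩
  | neg x _ hx =>
    obtain ⟨u, hu, hxu⟩ := hx
    exact ⟨x + u, hxu, by simpa using hu⟩

section Segments

variable {E : Type*} [AddCommGroup E] [Module ℝ E]

theorem LinearMap.eq_zero_of_eventually_add_smul_sub_mem {G : Set E} {β : E →ₗ[ℝ] ℝ}
    (hβ : ∀ z ∈ G, 0 ≤ β z) {x y : E} (hx : β x = 0) (hy : y ∈ G)
    (hxy : ∀ᶠ u in 𝓝[>] (0 : ℝ), x + u • (x - y) ∈ G) : β y = 0 := by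
  obtain ⟨u, hxu, hu⟩ := (hxy.and self_mem_nhdsWithin).exists
  have := hβ _ hxu
  simp only [map_add, map_smul, map_sub, hx, smul_eq_mul] at this
  nlinarith [hβ y hy, hu]

variable [TopologicalSpace E]

theorem mem_intrinsicInterior_of_isOpen {G U : Set E} {x : E} (hU : IsOpen U) (hxU : x ∈ U)
    (hxG : x ∈ G) (h : ∀ y ∈ affineSpan ℝ G, y ∈ U → y ∈ G) : x ∈ intrinsicInterior ℝ G :=
  ⟨⟨x, subset_affineSpan ℝ G hxG⟩,
    mem_interior.2 ⟨((↑) : affineSpan ℝ G → E) ⁻¹' U, fun y hy => h y y.2 hy,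
      hU.preimage continuous_subtype_val, hxU⟩,
    rfl⟩

variable [IsTopologicalAddGroup E] [ContinuousSMul ℝ E]

theorem eventually_add_smul_mem_of_mem_interior {G : Set E} {x : E} (hx : x ∈ interior G)
    (d : E) : ∀ᶠ u in 𝓝[>] (0 : ℝ), x + u • d ∈ G :=
  nhdsWithin_le_nhds <| (Continuous.tendsto' (by fun_prop) 0 x (by simp)).eventually <|
    mem_interior_iff_mem_nhds.1 hx

theorem eventually_add_smul_sub_mem_of_mem_intrinsicInterior {G : Set E} {x y : E}
    (hx : x ∈ intrinsicInterior ℝ G) (hy : y ∈ G) :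
    ∀ᶠ u in 𝓝[>] (0 : ℝ), x + u • (x - y) ∈ G := by
  obtain ⟨X, hX, rfl⟩ := hx
  have hmem : ∀ u : ℝ, (X : E) + u • ((X : E) - y) ∈ affineSpan ℝ G := fun u => by
    simpa [vsub_eq_sub, vadd_eq_add, add_comm] using
      AffineSubspace.smul_vsub_vadd_mem (affineSpan ℝ G) u X.2 (subset_affineSpan ℝ G hy) X.2
  have hcont : Continuous fun u : ℝ => (⟨_, hmem u⟩ : affineSpan ℝ G) := by fun_prop
  exact nhdsWithin_le_nhds <| (hcont.tendsto' 0 X (by simp)).eventually <|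
    mem_interior_iff_mem_nhds.1 hX

theorem LinearMap.eq_zero_of_mem_intrinsicInterior {G : Set E} {β : E →ₗ[ℝ] ℝ}
    (hβ : ∀ z ∈ G, 0 ≤ β z) {x y : E} (hx : x ∈ intrinsicInterior ℝ G) (hβx : β x = 0)
    (hy : y ∈ G) : β y = 0 :=
  β.eq_zero_of_eventually_add_smul_sub_mem hβ hβx hy
    (eventually_add_smul_sub_mem_of_mem_intrinsicInterior hx hy)

end Segments

namespace PointedCone

section FinitelyGenerated

variable {E ι : Type*} [AddCommGroup E] [Module ℝ E] {v : ι → E} {s : Finset ι} {x : E}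

theorem mem_hull_image_finset_iff :
    x ∈ hull ℝ (v '' s) ↔ ∃ c : ι → ℝ, (∀ i ∈ s, 0 ≤ c i) ∧ ∑ i ∈ s, c i • v i = x := by
  classical
  constructor
  · intro hx
    induction hx using Submodule.span_induction with
    | mem y hy =>
      obtain ⟨i, hi, rfl⟩ := hy
      refine ⟨Pi.single i 1, fun j _ => ?_, ?_⟩
      · by_cases h : j = i <;> simp [h]
      · rw [Finset.sum_eq_single i (fun j _ h => by simp [h]) (fun h => absurd hi h)]
        simp
    | zero => exact ⟨0, fun _ _ => le_rfl, by simp⟩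
    | add y z _ _ hy hz =>
      obtain ⟨c, hc, rfl⟩ := hy
      obtain ⟨d, hd, rfl⟩ := hz
      exact ⟨c + d, fun i hi => add_nonneg (hc i hi) (hd i hi),
        by simp only [Pi.add_apply, add_smul, Finset.sum_add_distrib]⟩
    | smul r y _ hy =>
      obtain ⟨c, hc, rfl⟩ := hy
      refine ⟨fun i => r * c i, fun i hi => mul_nonneg r.2 (hc i hi), ?_⟩
      simp only [Finset.smul_sum, mul_smul, Nonneg.coe_smul]
  · rintro ⟨c, hc, rfl⟩
    exact Submodule.sum_mem _ fun i hi =>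
      smul_mem _ (hc i hi) (subset_hull (mem_image_of_mem v hi))

-- Carathéodory's theorem for cones
theorem exists_linearIndepOn_of_mem_hull (hx : x ∈ hull ℝ (v '' s)) :
    ∃ t ⊆ s, LinearIndepOn ℝ v (t : Set ι) ∧ x ∈ hull ℝ (v '' t) := by
  classical
  induction s using Finset.strongInduction with
  | H s ih =>
  by_cases hind : LinearIndepOn ℝ v (s : Set ι)
  · exact ⟨s, subset_rfl, hind, hx⟩
  obtain ⟨e, he, i₀, hi₀, hei₀⟩ := not_linearIndepOn_finset_iff.1 hind
  obtain ⟨f, hf, j₀, hj₀, hfj₀⟩ : ∃ f : ι → ℝ, ∑ i ∈ s, f i • v i = 0 ∧ ∃ j ∈ s, 0 < f j := by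
    rcases hei₀.lt_or_gt with h | h
    · exact ⟨-e, by simp [neg_smul, he], i₀, hi₀, by simpa using h⟩
    · exact ⟨e, he, i₀, hi₀, h⟩
  obtain ⟨c, hc, rfl⟩ := mem_hull_image_finset_iff.1 hx
  obtain ⟨k, hk, hkmin⟩ := (s.filter (0 < f ·)).exists_min_image (fun i => c i / f i)
    ⟨j₀, Finset.mem_filter.2 ⟨hj₀, hfj₀⟩⟩
  obtain ⟨hks, hfk⟩ := Finset.mem_filter.1 hk
  set r := c k / f k
  have hc' : ∀ i ∈ s, 0 ≤ c i - r * f i := by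
    intro i hi
    rcases le_or_gt (f i) 0 with hfi | hfi
    · nlinarith [hc i hi, div_nonneg (hc k hks) hfk.le]
    · have := hkmin i (Finset.mem_filter.2 ⟨hi, hfi⟩)
      rw [le_div_iff₀ hfi] at this
      linarith
  have hsum : ∑ i ∈ s, c i • v i = ∑ i ∈ s.erase k, (c i - r * f i) • v i := by
    rw [Finset.sum_erase _ (by simp [r, div_mul_cancel₀ _ hfk.ne'])]
    simp only [sub_smul, Finset.sum_sub_distrib, mul_smul, ← Finset.smul_sum, hf, smul_zero,
      sub_zero]
  obtain ⟨t, hts, ht, hxt⟩ := ih (s.erase k) (Finset.erase_ssubset hks) <| by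
    rw [hsum]
    exact mem_hull_image_finset_iff.2
      ⟨_, fun i hi => hc' i (Finset.mem_of_mem_erase hi), rfl⟩
  exact ⟨t, hts.trans (Finset.erase_subset k s), ht, hxt⟩

theorem hull_image_finset_eq_range :
    (hull ℝ (v '' s) : Set E) =
      range fun c : {c : s → ℝ // ∀ k, 0 ≤ c k} => ∑ k, c.1 k • v k := by
  classical
  ext x
  simp only [SetLike.mem_coe, mem_hull_image_finset_iff, mem_range, Subtype.exists]
  constructor
  · rintro ⟨c, hc, rfl⟩
    exact ⟨fun k => c k, fun k => hc k k.2, (Finset.sum_coe_sort s fun i => c i • v i)⟩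
  · rintro ⟨c, hc, rfl⟩
    refine ⟨fun i => if hi : i ∈ s then c ⟨i, hi⟩ else 0, fun i hi => by simp [hi, hc], ?_⟩
    rw [← Finset.sum_coe_sort s]
    simp

theorem sep_hull_image_finset_eq {β : E →ₗ[ℝ] ℝ} (hβ : ∀ i ∈ s, 0 ≤ β (v i)) :
    {x ∈ (hull ℝ (v '' s) : Set E) | β x = 0} =
      hull ℝ (v '' (s.filter fun i => β (v i) = 0) : Set E) := by
  classical
  ext x
  simp only [SetLike.mem_coe, mem_hull_image_finset_iff]
  constructor
  · rintro ⟨⟨c, hc, rfl⟩, hx⟩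
    simp only [map_sum, map_smul, smul_eq_mul] at hx
    have hzero := (Finset.sum_eq_zero_iff_of_nonneg fun i hi =>
      mul_nonneg (hc i hi) (hβ i hi)).1 hx
    refine ⟨c, fun i hi => hc i (Finset.mem_filter.1 hi).1, Finset.sum_filter_of_ne ?_⟩
    intro i hi hci
    exact (mul_eq_zero.1 (hzero i hi)).resolve_left (left_ne_zero_of_smul hci)
  · rintro ⟨c, hc, rfl⟩
    refine ⟨⟨fun i => if β (v i) = 0 then c i else 0, fun i hi => ?_, ?_⟩, ?_⟩
    · dsimp only
      split_ifs with h
      · exact hc i (Finset.mem_filter.2 ⟨hi, h⟩)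
      · exact le_rfl
    · simp [ite_smul, Finset.sum_filter]
    · simp only [map_sum, map_smul, smul_eq_mul]
      exact Finset.sum_eq_zero fun i hi => by rw [(Finset.mem_filter.1 hi).2, mul_zero]

theorem eq_zero_of_map_sum_eq_zero {β : E →ₗ[ℝ] ℝ} (hβ : ∀ i ∈ s, 0 ≤ β (v i))
    (hsum : β (∑ i ∈ s, v i) = 0) (hx : x ∈ hull ℝ (v '' s)) : β x = 0 := by
  rw [map_sum] at hsum
  have hzero := (Finset.sum_eq_zero_iff_of_nonneg hβ).1 hsum
  obtain ⟨c, -, rfl⟩ := mem_hull_image_finset_iff.1 hx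
  simp only [map_sum, map_smul, smul_eq_mul]
  exact Finset.sum_eq_zero fun i hi => by rw [hzero i hi, mul_zero]

theorem finite_setOf_exposedFace :
    {G : Set E | ∃ β : E →ₗ[ℝ] ℝ, (∀ y ∈ hull ℝ (v '' s), 0 ≤ β y) ∧
      G = {y ∈ (hull ℝ (v '' s) : Set E) | β y = 0}}.Finite := by
  classical
  refine ((s.powerset.finite_toSet).image fun t : Finset ι => (hull ℝ (v '' t) : Set E)).subset ?_
  rintro G ⟨β, hβ, rfl⟩
  refine ⟨s.filter fun i => β (v i) = 0, Finset.mem_powerset.2 (Finset.filter_subset _ _), ?_⟩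
  rw [sep_hull_image_finset_eq fun i hi => hβ _ (subset_hull (mem_image_of_mem v hi))]

section Topological

variable [TopologicalSpace E] [IsTopologicalAddGroup E] [ContinuousSMul ℝ E] [T2Space E]

theorem isClosed_hull_image_finset_of_linearIndepOn (hv : LinearIndepOn ℝ v (s : Set ι)) :
    IsClosed (hull ℝ (v '' s) : Set E) := by
  have hemb := LinearMap.isClosedEmbedding_of_injective
    (f := Fintype.linearCombination ℝ fun k : s => v k) (LinearMap.ker_eq_bot.2 <|
      linearIndependent_iff_injective_fintypeLinearCombination.1 hv)
  have horth : IsClosed {c : s → ℝ | ∀ k, 0 ≤ c k} := by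
    simp only [ofPred_forall]
    exact isClosed_iInter fun k => isClosed_le continuous_const (continuous_apply k)
  convert hemb.isClosedMap _ horth using 1
  rw [hull_image_finset_eq_range]
  ext x
  simp [Fintype.linearCombination_apply]

theorem isClosed_hull_image_finset : IsClosed (hull ℝ (v '' s) : Set E) := by
  classical
  have : (hull ℝ (v '' s) : Set E) =
      ⋃ t ∈ s.powerset.filter fun t : Finset ι => LinearIndepOn ℝ v (t : Set ι),
        (hull ℝ (v '' (t : Set ι)) : Set E) := by
    ext x
    simp only [Finset.mem_filter, Finset.mem_powerset, mem_iUnion, SetLike.mem_coe, exists_prop]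
    constructor
    · intro hx
      obtain ⟨t, hts, ht, hxt⟩ := exists_linearIndepOn_of_mem_hull hx
      exact ⟨t, ⟨hts, ht⟩, hxt⟩
    · rintro ⟨t, ⟨hts, -⟩, hxt⟩
      exact Submodule.span_mono (image_mono (Finset.coe_subset.2 hts)) hxt
  rw [this]
  exact isClosed_biUnion_finset fun t ht =>
    isClosed_hull_image_finset_of_linearIndepOn (Finset.mem_filter.1 ht).2

end Topological

end FinitelyGenerated

end PointedCone

namespace PointedCone

section Farkas

variable {E : Type*} [NormedAddCommGroup E] [NormedSpace ℝ E] {C : PointedCone ℝ E}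

/-- Every proper exposed face `C ∩ ker γ` of `C` lies in a proper face `C ∩ ker (α i)`. -/
def ProperFacesCoveredBy {ι : Type*} (C : PointedCone ℝ E) (α : ι → E →ₗ[ℝ] ℝ) : Prop :=
  ∀ γ : E →ₗ[ℝ] ℝ, (∀ z ∈ C, 0 ≤ γ z) → (∃ z ∈ C, γ z ≠ 0) →
    ∃ i, (∀ z ∈ C, γ z = 0 → α i z = 0) ∧ ∃ z ∈ C, α i z ≠ 0

theorem exists_supporting_of_notMem_interior (hint : (interior (C : Set E)).Nonempty)
    {y : E} (hyC : y ∈ C) (hy : y ∉ interior (C : Set E)) :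
    ∃ γ : E →L[ℝ] ℝ, (∀ z ∈ C, 0 ≤ γ z) ∧ γ y = 0 ∧ ∀ z ∈ interior (C : Set E), 0 < γ z := by
  obtain ⟨f, hf⟩ := geometric_hahn_banach_open_point (C.convex.interior) isOpen_interior hy
  have hle : ∀ z ∈ C, f z ≤ f y := by
    have hsub : (C : Set E) ⊆ closure (interior (C : Set E)) := by
      rw [C.convex.closure_interior_eq_closure_of_nonempty_interior hint]
      exact subset_closure
    intro z hz
    exact closure_minimal (fun w hw => (hf w hw).le) (isClosed_le f.continuous continuous_const)
      (hsub hz)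
  have hfy0 : 0 ≤ f y := by simpa using hle 0 C.zero_mem
  have hnonpos : ∀ z ∈ C, f z ≤ 0 := by
    intro z hz
    by_contra! hfz
    have := hle (((f y + 1) / f z) • z) (C.smul_mem (by positivity) hz)
    rw [map_smul, smul_eq_mul, div_mul_cancel₀ _ hfz.ne'] at this
    linarith
  have hfy : f y = 0 := le_antisymm (hnonpos y hyC) hfy0
  refine ⟨-f, fun z hz => by simpa using hnonpos z hz, by simp [hfy], fun z hz => ?_⟩
  simpa [hfy] using hf z hz

theorem mem_of_forall_nonneg_of_interior_nonempty (hC : IsClosed (C : Set E))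
    (hint : (interior (C : Set E)).Nonempty) {ι : Type*} {α : ι → E →ₗ[ℝ] ℝ}
    (hα : ∀ i, ∀ z ∈ C, 0 ≤ α i z)
    (hsupp : C.ProperFacesCoveredBy α)
    {x : E} (hx : ∀ i, 0 ≤ α i x) : x ∈ C := by
  obtain ⟨c, hc⟩ := hint
  by_contra hxC
  set p : ℝ → E := fun u => c + u • (x - c)
  obtain ⟨u, ⟨⟨hu0, hu1⟩, hpu⟩, hmax⟩ :=
    (isCompact_Icc.inter_right (hC.preimage (by fun_prop : Continuous p))).exists_isGreatest
      ⟨0, left_mem_Icc.2 zero_le_one, by simpa [p] using interior_subset hc⟩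
  have hu1 : u < 1 := hu1.lt_of_ne (by rintro rfl; exact hxC (by simpa [p] using hpu))
  -- `p u` is the last point of the segment from `c` to `x` that lies in `C`
  have hpu_int : p u ∉ interior (C : Set E) := by
    intro h
    obtain ⟨w, hwC, hw0, hw1⟩ := ((eventually_add_smul_mem_of_mem_interior h (x - c)).and
      (Ioo_mem_nhdsGT (sub_pos.2 hu1))).exists
    have : u + w ≤ u := hmax ⟨⟨by linarith, by linarith⟩,
      show p (u + w) ∈ C by simpa [p, add_smul, add_assoc] using hwC⟩
    linarith
  obtain ⟨γ, hγC, hγu, hγint⟩ := exists_supporting_of_notMem_interior ⟨c, hc⟩ hpu hpu_int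
  obtain ⟨i, hiγ, z, hzC, hiz⟩ :=
    hsupp γ hγC ⟨c, interior_subset hc, (hγint c hc).ne'⟩
  have hic : 0 < α i c := (hα i c (interior_subset hc)).lt_of_ne' fun h => hiz <|
    (α i).eq_zero_of_eventually_add_smul_sub_mem (hα i) h hzC
      (eventually_add_smul_mem_of_mem_interior hc _)
  have := hiγ (p u) hpu hγu
  simp only [p, map_add, map_smul, map_sub, smul_eq_mul] at this
  nlinarith [hx i]

theorem mem_of_mem_span_of_forall_nonneg [FiniteDimensional ℝ E] (hC : IsClosed (C : Set E))
    {ι : Type*} {α : ι → E →ₗ[ℝ] ℝ} (hα : ∀ i, ∀ z ∈ C, 0 ≤ α i z)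
    (hsupp : C.ProperFacesCoveredBy α)
    {x : E} (hxs : x ∈ Submodule.span ℝ (C : Set E)) (hx : ∀ i, 0 ≤ α i x) : x ∈ C := by
  set W := Submodule.span ℝ (C : Set E)
  let C' : PointedCone ℝ W := C.comap W.subtype
  have hint : (interior (C' : Set W)).Nonempty := by
    rw [C'.convex.interior_nonempty_iff_affineSpan_eq_top,
      AffineSubspace.affineSpan_eq_top_iff_vectorSpan_eq_top_of_nonempty ℝ W W ⟨0, C'.zero_mem⟩,
      vectorSpan_eq_span_vsub_set_right ℝ C'.zero_mem]
    simp only [vsub_eq_sub, sub_zero, image_id']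
    exact Submodule.span_span_coe_preimage
  refine mem_of_forall_nonneg_of_interior_nonempty (C := C') (hC.preimage continuous_subtype_val)
    hint (α := fun i => α i ∘ₗ W.subtype) (fun i z hz => hα i z hz) ?_ (x := ⟨x, hxs⟩) hx
  rintro γ' hγ' ⟨z, hzC, hz⟩
  obtain ⟨γ, hγ⟩ := LinearMap.exists_extend γ'
  have hγW : ∀ w : W, γ w = γ' w := fun w => LinearMap.congr_fun hγ w
  obtain ⟨i, hi, z', hz'C, hz'⟩ := hsupp γ
    (fun w hw => by simpa [hγW ⟨w, Submodule.subset_span hw⟩] using hγ' ⟨w, _⟩ hw)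
    ⟨z, hzC, by rwa [hγW]⟩
  exact ⟨i, fun w hw hγw => hi w hw (by rwa [hγW]), ⟨z', Submodule.subset_span hz'C⟩, hz'C, hz'⟩

theorem mem_intrinsicInterior_of_mem_span [FiniteDimensional ℝ E] (hC : IsClosed (C : Set E))
    {ι : Type*} [Finite ι] {α : ι → E →ₗ[ℝ] ℝ} (hα : ∀ i, ∀ z ∈ C, 0 ≤ α i z)
    (hsupp : C.ProperFacesCoveredBy α)
    {x : E} (hxs : x ∈ Submodule.span ℝ (C : Set E)) (hx : ∀ i, 0 ≤ α i x) :
    x ∈ intrinsicInterior ℝ {z ∈ (C : Set E) | ∀ i, α i x = 0 → α i z = 0} := by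
  set G := {z ∈ (C : Set E) | ∀ i, α i x = 0 → α i z = 0}
  have hspan : ∀ y ∈ affineSpan ℝ G, y ∈ Submodule.span ℝ (C : Set E) := fun y hy =>
    (affineSpan_le.2 fun z hz => Submodule.subset_span hz.1 :
      affineSpan ℝ G ≤ (Submodule.span ℝ (C : Set E)).toAffineSubspace) hy
  have hker : ∀ i, α i x = 0 → ∀ y ∈ affineSpan ℝ G, α i y = 0 := fun i hi y hy =>
    (affineSpan_le.2 fun z hz => hz.2 i hi :
      affineSpan ℝ G ≤ (LinearMap.ker (α i)).toAffineSubspace) hy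
  have hU : IsOpen {y | ∀ i, 0 < α i x → 0 < α i y} := by
    simp only [ofPred_forall]
    refine isOpen_iInter_of_finite fun i => ?_
    by_cases h : 0 < α i x
    · simpa [h] using isOpen_lt continuous_const (α i).continuous_of_finiteDimensional
    · simp [h]
  refine mem_intrinsicInterior_of_isOpen hU (fun i h => h)
    ⟨mem_of_mem_span_of_forall_nonneg hC hα hsupp hxs hx, fun i h => h⟩ fun y hy hyU => ?_
  have hy0 : ∀ i, α i x = 0 → α i y = 0 := fun i hi => hker i hi y hy
  refine ⟨mem_of_mem_span_of_forall_nonneg hC hα hsupp (hspan y hy) fun i => ?_, hy0⟩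
  rcases (hx i).eq_or_lt with h | h
  · exact (hy0 i h.symm).ge
  · exact (hyU i h).le

end Farkas

end PointedCone

section AffineMonoid

open PointedCone

variable {m : ℕ} {M : AddSubmonoid (Fin m → ℤ)}

def toRHom (m : ℕ) : (Fin m → ℤ) →+ (Fin m → ℝ) := (Int.castAddHom ℝ).compLeft (Fin m)

theorem coe_toRHom : ⇑(toRHom m) = toR := rfl

theorem toR_add (a b : Fin m → ℤ) : toR (a + b) = toR a + toR b := map_add (toRHom m) a b

theorem coneM_eq_hull (M : AddSubmonoid (Fin m → ℤ)) :
    coneM M = (hull ℝ (toR '' (M : Set (Fin m → ℤ))) : Set (Fin m → ℝ)) := by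
  ext x
  rw [SetLike.mem_coe, Submodule.mem_span_set']
  constructor
  · rintro ⟨n, c, v, hc, hv, rfl⟩
    exact ⟨n, fun i => ⟨c i, hc i⟩, fun i => ⟨toR (v i), v i, hv i, rfl⟩, rfl⟩
  · rintro ⟨n, c, v, rfl⟩
    choose w hwM hw using fun i => (v i).2
    exact ⟨n, fun i => c i, w, fun i => (c i).2, hwM, by simp [hw, Nonneg.coe_smul]⟩

theorem coneM_eq_hull_of_closure_eq {s : Finset (Fin m → ℤ)}
    (hs : AddSubmonoid.closure (s : Set (Fin m → ℤ)) = M) :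
    coneM M = (hull ℝ (toR '' (s : Set (Fin m → ℤ))) : Set (Fin m → ℝ)) := by
  rw [coneM_eq_hull]
  refine congrArg SetLike.coe (le_antisymm (Submodule.span_le.2 ?_) (Submodule.span_mono ?_))
  · rintro _ ⟨a, ha, rfl⟩
    rw [← hs] at ha
    induction ha using AddSubmonoid.closure_induction with
    | mem a ha => exact subset_hull (mem_image_of_mem toR ha)
    | zero => simp [← coe_toRHom]
    | add a b _ _ ha hb => rw [toR_add]; exact add_mem ha hb
  · exact image_mono (hs ▸ AddSubmonoid.subset_closure)

theorem toR_mem_coneM {a : Fin m → ℤ} (ha : a ∈ M) : toR a ∈ coneM M := by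
  rw [coneM_eq_hull]; exact subset_hull (mem_image_of_mem toR ha)

theorem isClosed_coneM (hM : M.FG) : IsClosed (coneM M) := by
  obtain ⟨s, hs⟩ := hM
  rw [coneM_eq_hull_of_closure_eq hs]
  exact isClosed_hull_image_finset

theorem toR_mem_span_coneM {a : Fin m → ℤ} (ha : a ∈ gp M) :
    toR a ∈ Submodule.span ℝ (coneM M) := by
  induction ha using AddSubgroup.closure_induction with
  | mem a ha => exact Submodule.subset_span (toR_mem_coneM ha)
  | zero => simp [← coe_toRHom]
  | add a b _ _ ha hb => rw [toR_add]; exact add_mem ha hb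
  | neg a _ ha => simpa [← coe_toRHom] using neg_mem ha

theorem IsFace.subset_coneM {G : Set (Fin m → ℝ)} (hG : IsFace M G) : G ⊆ coneM M := by
  rcases hG with rfl | ⟨β, -, rfl⟩
  · exact subset_rfl
  · exact sep_subset _ _

theorem isFace_setOf_forall_imp {ι : Type*} [Fintype ι] {α : ι → (Fin m → ℝ) →ₗ[ℝ] ℝ}
    (hα : ∀ i, ∀ x ∈ coneM M, 0 ≤ α i x) (p : ι → Prop) :
    IsFace M {x ∈ coneM M | ∀ i, p i → α i x = 0} := by
  classical
  refine Or.inr ⟨∑ i with p i, α i, fun x hx => ?_, ?_⟩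
  · simpa using Finset.sum_nonneg fun i _ => hα i x hx
  · ext x
    simp only [mem_sep_iff, LinearMap.coe_sum, Finset.sum_apply, and_congr_right_iff]
    intro hx
    rw [Finset.sum_eq_zero_iff_of_nonneg fun i _ => hα i x hx]
    simp

theorem finite_setOf_isFace (hM : M.FG) : {G | IsFace M G}.Finite := by
  obtain ⟨s, hs⟩ := hM
  refine ((finite_setOf_exposedFace (v := toR) (s := s)).insert (coneM M)).subset ?_
  rintro G (rfl | ⟨β, hβ, rfl⟩)
  · exact mem_insert _ _
  · rw [coneM_eq_hull_of_closure_eq hs] at hβ ⊢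
    exact mem_insert_of_mem _ ⟨β, hβ, rfl⟩

theorem exists_isFacet_superset (hM : M.FG) {G : Set (Fin m → ℝ)} (hG : IsFace M G)
    (hGC : G ≠ coneM M) : ∃ H, IsFacet M H ∧ G ⊆ H := by
  obtain ⟨H, ⟨⟨hH, hHC, hGH⟩, hmax⟩⟩ := Set.Finite.exists_maximalFor id
    {H | IsFace M H ∧ H ≠ coneM M ∧ G ⊆ H}
    ((finite_setOf_isFace hM).subset fun H hH => hH.1) ⟨G, hG, hGC, subset_rfl⟩
  refine ⟨H, ⟨hH, hHC, fun H' hH' hHH' => ?_⟩, hGH⟩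
  by_cases hH'C : H' = coneM M
  · exact Or.inr hH'C
  · exact Or.inl ((hmax ⟨hH', hH'C, hGH.trans hHH'⟩ hHH').antisymm hHH')

theorem mem_gpF_of_add_mem {F : Set (Fin m → ℝ)} {a b : Fin m → ℤ} (hb : b ∈ M)
    (hbF : toR b ∈ F) (hab : a + b ∈ M) (habF : toR (a + b) ∈ F) : a ∈ gpF M F := by
  have hab' : a + b ∈ gpF M F := AddSubgroup.subset_closure ⟨hab, habF⟩
  simpa using sub_mem hab' (AddSubgroup.subset_closure ⟨hb, hbF⟩)

theorem exists_add_mem_of_mem_gpF {β : (Fin m → ℝ) →ₗ[ℝ] ℝ} {a : Fin m → ℤ}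
    (ha : a ∈ gpF M {x ∈ coneM M | β x = 0}) :
    ∃ b, b ∈ M ∧ toR b ∈ {x ∈ coneM M | β x = 0} ∧ a + b ∈ M := by
  let N := M ⊓ AddMonoidHom.mker (β.toAddMonoidHom.comp (toRHom m))
  have hN : {a | a ∈ M ∧ toR a ∈ {x ∈ coneM M | β x = 0}} = N := by
    ext a
    exact ⟨fun h => ⟨h.1, h.2.2⟩, fun h => ⟨h.1, toR_mem_coneM h.1, h.2⟩⟩
  rw [gpF, hN] at ha
  obtain ⟨b, hb, hab⟩ := AddSubgroup.exists_add_mem_of_mem_closure ha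
  exact ⟨b, hb.1, ⟨toR_mem_coneM hb.1, hb.2⟩, hab.1⟩

theorem IsFacet.eq_of_subset {H H' : Set (Fin m → ℝ)} (hH : IsFacet M H) (hH' : IsFacet M H')
    (h : H ⊆ H') : H' = H :=
  (hH.2.2 H' hH'.1 h).resolve_right hH'.2.1

end AffineMonoid

section FacetPresentation

open PointedCone

variable {m : ℕ} {M : AddSubmonoid (Fin m → ℤ)}

structure IsFacetPresentation {ι : Type*} (M : AddSubmonoid (Fin m → ℤ))
    (α : ι → (Fin m → ℝ) →ₗ[ℝ] ℝ) : Prop where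
  nonneg : ∀ i, ∀ x ∈ coneM M, 0 ≤ α i x
  isFacet_iff : ∀ G, IsFacet M G ↔ ∃ i, G = {x ∈ coneM M | α i x = 0}

namespace IsFacetPresentation

variable {ι : Type*} {α : ι → (Fin m → ℝ) →ₗ[ℝ] ℝ} (hP : IsFacetPresentation M α)
include hP

theorem isFacet (i : ι) : IsFacet M {x ∈ coneM M | α i x = 0} := (hP.isFacet_iff _).2 ⟨i, rfl⟩

theorem properFacesCoveredBy (hM : M.FG) :
    (hull ℝ (toR '' (M : Set (Fin m → ℤ)))).ProperFacesCoveredBy α := by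
  intro γ hγ hγC
  simp only [← SetLike.mem_coe, ← coneM_eq_hull] at hγ hγC ⊢
  obtain ⟨z, hz, hγz⟩ := hγC
  obtain ⟨H, hH, hsub⟩ := exists_isFacet_superset hM (Or.inr ⟨γ, hγ, rfl⟩) fun h =>
    hγz (h.symm ▸ hz : z ∈ {x ∈ coneM M | γ x = 0}).2
  obtain ⟨i, rfl⟩ := (hP.isFacet_iff H).1 hH
  refine ⟨i, fun y hy hγy => (hsub ⟨hy, hγy⟩).2, ?_⟩
  by_contra! h0
  exact hH.2.1 (subset_antisymm (sep_subset _ _) fun y hy => ⟨hy, h0 y hy⟩)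

theorem toR_mem_intrinsicInterior [Finite ι] (hM : M.FG) {a : Fin m → ℤ} (ha : a ∈ gp M)
    (hnn : ∀ i, 0 ≤ α i (toR a)) :
    toR a ∈ intrinsicInterior ℝ {x ∈ coneM M | ∀ i, α i (toR a) = 0 → α i x = 0} := by
  have hC := coneM_eq_hull M
  have hCl := isClosed_coneM hM
  have hspan := toR_mem_span_coneM ha
  have hα := hP.nonneg
  rw [hC] at hCl hspan hα ⊢
  exact mem_intrinsicInterior_of_mem_span hCl hα (hP.properFacesCoveredBy hM) hspan hnn

theorem subset_of_mem_intrinsicInterior {G : Set (Fin m → ℝ)} (hG : IsFace M G)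
    {x : Fin m → ℝ} (hx : x ∈ intrinsicInterior ℝ G) {i : ι} (hxi : α i x = 0) :
    G ⊆ {x ∈ coneM M | α i x = 0} := fun _ hy =>
  ⟨hG.subset_coneM hy, (α i).eq_zero_of_mem_intrinsicInterior
    (fun _ hz => hP.nonneg i _ (hG.subset_coneM hz)) hx hxi hy⟩

theorem exists_mem_facet_pos_of_ne {s : Finset (Fin m → ℤ)}
    (hs : AddSubmonoid.closure (s : Set (Fin m → ℤ)) = M) (i : ι) :
    ∃ b ∈ M, α i (toR b) = 0 ∧ ∀ j, {x ∈ coneM M | α j x = 0} ≠ {x ∈ coneM M | α i x = 0} →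
      0 < α j (toR b) := by
  classical
  have hsM : ∀ g ∈ s, g ∈ M := fun g hg => hs ▸ AddSubmonoid.subset_closure hg
  have hgen : ∀ j, ∀ g ∈ s, 0 ≤ α j (toR g) := fun j g hg =>
    hP.nonneg j _ (toR_mem_coneM (hsM g hg))
  set t := s.filter fun g => α i (toR g) = 0
  have hbM : ∑ g ∈ t, g ∈ M := sum_mem fun g hg => hsM g (Finset.mem_of_mem_filter g hg)
  have hb : toR (∑ g ∈ t, g) = ∑ g ∈ t, toR g := map_sum (toRHom m) _ _
  have hfacet : {x ∈ coneM M | α i x = 0} = hull ℝ (toR '' (t : Set (Fin m → ℤ))) := by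
    rw [coneM_eq_hull_of_closure_eq hs]
    exact sep_hull_image_finset_eq (hgen i)
  refine ⟨_, hbM, ?_, fun j hji =>
    (hP.nonneg j _ (toR_mem_coneM hbM)).lt_of_ne' fun hj => hji ?_⟩
  · rw [hb, map_sum]
    exact Finset.sum_eq_zero fun g hg => (Finset.mem_filter.1 hg).2
  · refine (hP.isFacet i).eq_of_subset (hP.isFacet j) fun x hx => ⟨hx.1, ?_⟩
    rw [hfacet] at hx
    exact eq_zero_of_map_sum_eq_zero (fun g hg => hgen j g (Finset.mem_of_mem_filter g hg))
      (hb ▸ hj) hx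

theorem exists_add_mem_of_not_subset [Finite ι] (hM : M.FG)
    (hrel : ∀ z ∈ gp M, toR z ∈ intrinsicInterior ℝ (coneM M) → z ∈ M)
    {G : Set (Fin m → ℝ)} (hG : IsFace M G) {a : Fin m → ℤ} (ha : a ∈ gp M)
    (hx : toR a ∈ intrinsicInterior ℝ G) {i : ι} (hGi : ¬G ⊆ {x ∈ coneM M | α i x = 0}) :
    ∃ b, b ∈ M ∧ toR b ∈ {x ∈ coneM M | α i x = 0} ∧ a + b ∈ M := by
  obtain ⟨s, hs⟩ := hM
  obtain ⟨b, hbM, hbi, hbpos⟩ := hP.exists_mem_facet_pos_of_ne hs i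
  have hab : a + b ∈ gp M := add_mem ha (AddSubgroup.subset_closure hbM)
  have hpos : ∀ j, 0 < α j (toR (a + b)) := by
    intro j
    rw [toR_add, map_add]
    have ha0 := hP.nonneg j _ (hG.subset_coneM (intrinsicInterior_subset hx))
    have hb0 := hP.nonneg j _ (toR_mem_coneM hbM)
    rcases ha0.eq_or_lt with h | h
    · have hGj := hP.subset_of_mem_intrinsicInterior hG hx h.symm
      have := hbpos j fun hji => hGi (hji ▸ hGj)
      linarith
    · linarith
  refine ⟨b, hbM, ⟨toR_mem_coneM hbM, hbi⟩, hrel _ hab ?_⟩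
  simpa [(hpos _).ne'] using hP.toR_mem_intrinsicInterior ⟨s, hs⟩ hab fun j => (hpos j).le

end IsFacetPresentation

end FacetPresentation

/-- If `gp(M) ∩ relint(cone(M)) ⊆ M`, then
`M' = ⋃_F (⋂_{F ⊆ F_i} gp(M ∩ F_i)) ∩ relint(F)`, the union over all faces
`F` of `cone(M)` (with the empty intersection equal to `gp(M)`). -/
theorem primeM_eq_union_faces {m : ℕ} (M : AddSubmonoid (Fin m → ℤ)) (hFG : M.FG)
    (t : ℕ) (F : Fin t → Set (Fin m → ℝ)) (α : Fin t → ((Fin m → ℝ) →ₗ[ℝ] ℝ))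
    (hα : ∀ i, ∀ x ∈ coneM M, 0 ≤ α i x)
    (hFdef : ∀ i, F i = {x ∈ coneM M | α i x = 0})
    (hfacets : ∀ G : Set (Fin m → ℝ), IsFacet M G ↔ ∃ i, G = F i)
    (hrel : ∀ z ∈ gp M, toR z ∈ intrinsicInterior ℝ (coneM M) → z ∈ M) :
    {a : Fin m → ℤ | a ∈ gp M ∧ ∀ i, ∃ b, b ∈ M ∧ toR b ∈ F i ∧ a + b ∈ M} =
      {a : Fin m → ℤ | ∃ G : Set (Fin m → ℝ), IsFace M G ∧ a ∈ gp M ∧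
        (∀ i, G ⊆ F i → a ∈ gpF M (F i)) ∧ toR a ∈ intrinsicInterior ℝ G} := by
  obtain rfl : F = fun i => {x ∈ coneM M | α i x = 0} := funext hFdef
  have hP : IsFacetPresentation M α := ⟨hα, hfacets⟩
  ext a
  constructor
  · rintro ⟨ha, hb⟩
    have hnn : ∀ i, 0 ≤ α i (toR a) := fun i => by
      obtain ⟨b, -, ⟨-, hb0⟩, hab⟩ := hb i
      simpa [toR_add, hb0] using hα i _ (toR_mem_coneM hab)
    have hrelint := hP.toR_mem_intrinsicInterior hFG ha hnn
    refine ⟨_, isFace_setOf_forall_imp hα _, ha, fun i hGi => ?_, hrelint⟩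
    have ha0 : α i (toR a) = 0 := (hGi (intrinsicInterior_subset hrelint)).2
    obtain ⟨b, hbM, hbF, hab⟩ := hb i
    exact mem_gpF_of_add_mem hbM hbF hab ⟨toR_mem_coneM hab, by simp [toR_add, ha0, hbF.2]⟩
  · rintro ⟨G, hG, ha, hgpF, hrelint⟩
    refine ⟨ha, fun i => ?_⟩
    by_cases hGi : G ⊆ {x ∈ coneM M | α i x = 0}
    · exact exists_add_mem_of_mem_gpF (hgpF i hGi)
    · exact hP.exists_add_mem_of_not_subset hFG hrel hG ha hrelint hGi
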